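/- Let n ≥ 2, let s : Fin n → EuclideanSpace ℝ (Fin n) be the centered standard simplex vertices, and let i ≠ j. Then the orthogonal reflection R of EuclideanSpace ℝ (Fin n) in the hyperplane {x : ⟪x, s i − s j⟫ = 0} (the reflection across the orthogonal complement of span(s i − s j)) satisfies R (s i) = s j, R (s j) = s i, and R (s k) = s k for every k ≠ i, j. (Swapping two simplex vertices is realized by a single reflection fixing the remaining vertices.) -/

import Mathlib

open scoped RealInnerProductSpace

/-- The centered standard simplex vertices: `s i = e_i - (1/n) • ∑ j, e_j`,
where `e_i` is the standard basis of `EuclideanSpace ℝ (Fin n)`. -/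
noncomputable def simplexPt (n : ℕ) (i : Fin n) : EuclideanSpace ℝ (Fin n) :=
  EuclideanSpace.single i (1 : ℝ) - ((1 : ℝ) / n) • ∑ j, EuclideanSpace.single j (1 : ℝ)

/-- The orthogonal reflection in the hyperplane through the origin with normal vector `v`:
`x ↦ x - 2 (⟪x, v⟫ / ‖v‖²) • v`. -/
noncomputable def reflHyp (n : ℕ) (v : EuclideanSpace ℝ (Fin n))
    (x : EuclideanSpace ℝ (Fin n)) : EuclideanSpace ℝ (Fin n) :=
  x - (2 * ⟪x, v⟫ / ‖v‖ ^ 2) • v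

/-!
Since `s i - s j = e_i - e_j`, the hyperplane `⟪x, s i - s j⟫ = 0` is `x i = x j`, which contains
every `s k` with `k ≠ i, j`. The vertices `s i` and `s j` have equal norms, and the reflection in
the perpendicular bisector of two vectors of equal norm exchanges them.
-/

section reflHyp

variable {n : ℕ}

theorem reflHyp_of_inner_eq_zero {v x : EuclideanSpace ℝ (Fin n)} (h : ⟪x, v⟫ = 0) :
    reflHyp n v x = x := by
  simp [reflHyp, h]

theorem reflHyp_neg (v : EuclideanSpace ℝ (Fin n)) : reflHyp n (-v) = reflHyp n v := by
  funext x
  simp [reflHyp, inner_neg_right, neg_div]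

theorem reflHyp_sub_apply_left {x y : EuclideanSpace ℝ (Fin n)} (h : ‖x‖ = ‖y‖) :
    reflHyp n (x - y) x = y := by
  by_cases hxy : x = y
  · simp [reflHyp, hxy]
  have hv : ‖x - y‖ ^ 2 ≠ 0 := by simpa [sub_eq_zero] using hxy
  have hcoeff : 2 * ⟪x, x - y⟫ = ‖x - y‖ ^ 2 := by
    rw [norm_sub_sq_real, inner_sub_right, real_inner_self_eq_norm_sq, h]
    ring
  simp [reflHyp, hcoeff, div_self hv]

theorem reflHyp_sub_apply_right {x y : EuclideanSpace ℝ (Fin n)} (h : ‖x‖ = ‖y‖) :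
    reflHyp n (x - y) y = x := by
  rw [← neg_sub, reflHyp_neg, reflHyp_sub_apply_left h.symm]

end reflHyp

section simplexPt

variable {n : ℕ}

theorem simplexPt_apply (k m : Fin n) :
    simplexPt n k m = (if m = k then 1 else 0) - 1 / n := by
  simp [simplexPt]

theorem simplexPt_sub_simplexPt (i j : Fin n) :
    simplexPt n i - simplexPt n j =
      EuclideanSpace.single i (1 : ℝ) - EuclideanSpace.single j (1 : ℝ) := by
  simp only [simplexPt]
  abel

theorem inner_simplexPt_sub_simplexPt (x : EuclideanSpace ℝ (Fin n)) (i j : Fin n) :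
    ⟪x, simplexPt n i - simplexPt n j⟫ = x i - x j := by
  simp [simplexPt_sub_simplexPt, inner_sub_right, EuclideanSpace.inner_single_right]

theorem norm_simplexPt_eq (i j : Fin n) : ‖simplexPt n i‖ = ‖simplexPt n j‖ := by
  rw [← real_inner_add_sub_eq_zero_iff, inner_simplexPt_sub_simplexPt]
  by_cases hij : i = j
  · simp [hij]
  · simp only [PiLp.add_apply, simplexPt_apply, hij, Ne.symm hij, if_true, if_false]
    ring

end simplexPt

theorem reflection_swaps_simplex_vertices_general (n : ℕ) (i j : Fin n) :
    reflHyp n (simplexPt n i - simplexPt n j) (simplexPt n i) = simplexPt n j ∧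
    reflHyp n (simplexPt n i - simplexPt n j) (simplexPt n j) = simplexPt n i ∧
    ∀ k : Fin n, k ≠ i → k ≠ j →
      reflHyp n (simplexPt n i - simplexPt n j) (simplexPt n k) = simplexPt n k := by
  refine ⟨reflHyp_sub_apply_left (norm_simplexPt_eq i j),
    reflHyp_sub_apply_right (norm_simplexPt_eq i j), fun k hki hkj => ?_⟩
  apply reflHyp_of_inner_eq_zero
  simp [inner_simplexPt_sub_simplexPt, simplexPt_apply, Ne.symm hki, Ne.symm hkj]

theorem reflection_swaps_simplex_vertices (n : ℕ) (hn : 2 ≤ n) (i j : Fin n) (hij : i ≠ j) :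
    reflHyp n (simplexPt n i - simplexPt n j) (simplexPt n i) = simplexPt n j ∧
    reflHyp n (simplexPt n i - simplexPt n j) (simplexPt n j) = simplexPt n i ∧
    ∀ k : Fin n, k ≠ i → k ≠ j →
      reflHyp n (simplexPt n i - simplexPt n j) (simplexPt n k) = simplexPt n k :=
  reflection_swaps_simplex_vertices_general n i j
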